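/- If M is a binary matroid, then for any two disjoint bases A and B of M and any two distinct elements a, a' ∈ A, the set Conn(a,a',A,B) = {b ∈ B : A - a' + b and B - b + a are bases} has even cardinality. -/

import Mathlib

open Set

variable {α : Type*}

/-- A circuit: a minimal dependent set. -/
def IsCircuit (M : Matroid α) (C : Set α) : Prop :=
  M.Dep C ∧ ∀ D, D ⊂ C → M.Indep D

/-- `C` is the fundamental circuit of `x` with respect to the basis `B`:
the unique circuit contained in `B ∪ {x}`. -/
def IsFundCct (M : Matroid α) (C : Set α) (x : α) (B : Set α) : Prop :=
  IsCircuit M C ∧ x ∈ C ∧ C ⊆ insert x B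

/-- `SymEx M a A B` : the elements `b ∈ B` such that `A - a + b` and `B - b + a` are bases. -/
def SymEx (M : Matroid α) (a : α) (A B : Set α) : Set α :=
  {b ∈ B | M.IsBase (insert b (A \ {a})) ∧ M.IsBase (insert a (B \ {b}))}

/-- `ConnEx M a a' A B` : the elements `b ∈ B` such that `A - a' + b` and `B - b + a` are bases. -/
def ConnEx (M : Matroid α) (a a' : α) (A B : Set α) : Set α :=
  {b ∈ B | M.IsBase (insert b (A \ {a'})) ∧ M.IsBase (insert a (B \ {b}))}

/-- A binary matroid, via the circuit characterization: the symmetric difference of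
any two distinct circuits contains a circuit. -/
def Binary (M : Matroid α) : Prop :=
  ∀ C₁ C₂, IsCircuit M C₁ → IsCircuit M C₂ → C₁ ≠ C₂ →
    ∃ C, IsCircuit M C ∧ C ⊆ symmDiff C₁ C₂

/-- A hyperplane: a maximal proper flat. -/
def IsHyperplane (M : Matroid α) (H : Set α) : Prop :=
  M.IsFlat H ∧ H ≠ M.E ∧ ∀ F, M.IsFlat F → H ⊂ F → F = M.E

/-!
`ConnEx M a a' A B` is the intersection of the fundamental circuit of `a` with respect to `B`
and the fundamental cocircuit of `a'` with respect to `A`, so it suffices that in a binary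
matroid every circuit `C` meets every cocircuit `K` in an even number of elements.

This goes by induction on the ground set. An element `e ∉ K` is contracted: `C \ {e}` is
dependent in `M ／ {e}`, and if it is not itself a circuit there, the symmetric-difference
property splits it into two circuits of `M ／ {e}`. An element of `K \ C` is deleted. Both
minors are again binary. What remains is `C = K = E`: then `M` is a single circuit whose dual
has rank one, so `|E| = 2`.
-/

section

variable {M : Matroid α} {C T K : Set α} {e : α}

lemma isCircuit_iff_isCircuit : IsCircuit M C ↔ M.IsCircuit C := by
  rw [Matroid.isCircuit_iff_forall_ssubset, IsCircuit]

lemma binary_iff : Binary M ↔ ∀ ⦃C₁ C₂⦄, M.IsCircuit C₁ → M.IsCircuit C₂ →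
    C₁ ≠ C₂ → ∃ C ⊆ symmDiff C₁ C₂, M.IsCircuit C := by
  simp only [Binary, isCircuit_iff_isCircuit, and_comm]

open Matroid

lemma Binary.exists_isCircuit_subset_symmDiff (hM : Binary M) {C₁ C₂ : Set α}
    (hC₁ : M.IsCircuit C₁) (hC₂ : M.IsCircuit C₂) (hne : C₁ ≠ C₂) :
    ∃ C ⊆ symmDiff C₁ C₂, M.IsCircuit C :=
  binary_iff.1 hM hC₁ hC₂ hne

lemma Binary.delete (hM : Binary M) (D : Set α) : Binary (M ＼ D) := by
  refine binary_iff.2 fun C₁ C₂ hC₁ hC₂ hne ↦ ?_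
  rw [delete_isCircuit_iff] at hC₁ hC₂
  obtain ⟨C, hCss, hC⟩ := hM.exists_isCircuit_subset_symmDiff hC₁.1 hC₂.1 hne
  refine ⟨C, hCss, delete_isCircuit_iff.2 ⟨hC, ?_⟩⟩
  exact (hC₁.2.union_left hC₂.2).mono_left (hCss.trans symmDiff_subset_union)

lemma Matroid.IsCircuit.notMem_of_contractElem (hC : (M ／ {e}).IsCircuit C) : e ∉ C :=
  fun he ↦ (hC.subset_ground he).2 rfl

lemma Matroid.IsCircuit.sdiff_eq_of_contractElem (hC : (M ／ {e}).IsCircuit C)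
    {C' : Set α} (hCC' : C ⊆ C') (hC'C : C' ⊆ C ∪ {e}) : C' \ {e} = C :=
  subset_antisymm (fun _ hx ↦ (hC'C hx.1).resolve_right hx.2)
    (subset_sdiff_singleton hCC' hC.notMem_of_contractElem)

lemma Binary.contractElem (hM : Binary M) (e : α) : Binary (M ／ {e}) := by
  refine binary_iff.2 fun C₁ C₂ hC₁ hC₂ hne ↦ ?_
  obtain ⟨C₁', hC₁', h₁, h₁'⟩ := hC₁.exists_subset_isCircuit_of_contract
  obtain ⟨C₂', hC₂', h₂, h₂'⟩ := hC₂.exists_subset_isCircuit_of_contract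
  have hne' : C₁' ≠ C₂' := by
    rintro rfl
    exact hne ((hC₁.sdiff_eq_of_contractElem h₁ h₁').symm.trans
      (hC₂.sdiff_eq_of_contractElem h₂ h₂'))
  obtain ⟨C, hCss, hC⟩ := hM.exists_isCircuit_subset_symmDiff hC₁' hC₂' hne'
  -- `C ⊆ {e}` would make `e` a loop, and a loop lies in no circuit of `M` other than `{e}`.
  have hCe : ¬ C ⊆ {e} := by
    intro hCe
    obtain rfl := hC.nonempty.subset_singleton_iff.1 hCe
    have hlift : ∀ {D D'}, (M ／ {e}).IsCircuit D → D ⊆ D' → M.IsCircuit D' → e ∉ D' := by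
      intro D D' hD hDD' hD' heD'
      obtain ⟨y, hy⟩ := hD.nonempty
      obtain rfl : y = e :=
        ((singleton_isCircuit.1 hC).eq_of_isCircuit_mem hD' heD').subset (hDD' hy)
      exact hD.notMem_of_contractElem hy
    rcases hCss rfl with ⟨he₁, -⟩ | ⟨he₂, -⟩
    exacts [hlift hC₁ h₁ hC₁' he₁, hlift hC₂ h₂ hC₂' he₂]
  obtain ⟨C', hC'ss, hC'⟩ := (hC.contract_dep_of_not_subset hCe).exists_isCircuit_subset
  refine ⟨C', hC'ss.trans ?_, hC'⟩
  tauto_set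

lemma Matroid.IsCircuit.isCircuit_insert_of_contractElem (hT : (M ／ {e}).IsCircuit T)
    (hTM : ¬ M.IsCircuit T) : M.IsCircuit (insert e T) := by
  obtain ⟨C, hC, hTC, hCT⟩ := hT.exists_subset_isCircuit_of_contract
  rw [union_singleton] at hCT
  have heC : e ∈ C := by
    by_contra heC
    exact hTM (((subset_insert_iff_of_notMem heC).1 hCT).antisymm hTC ▸ hC)
  rwa [(insert_subset heC hTC).antisymm hCT]

/- A circuit `C₂ ⊆ insert e T ∆ C` must contain `e`; then `insert e T ∆ C₂ ⊆ C` contains a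
circuit, which can only be `C`, and this forces `C₂ = insert e (C \ T)`. -/
lemma Binary.isCircuit_insert_sdiff (hM : Binary M) (hC : M.IsCircuit C)
    (hTe : M.IsCircuit (insert e T)) (hT : T.Nonempty) (hTC : T ⊂ C) (heC : e ∉ C) :
    M.IsCircuit (insert e (C \ T)) := by
  obtain ⟨C₂, hC₂ss, hC₂⟩ := hM.exists_isCircuit_subset_symmDiff hTe hC
    (fun h ↦ heC (h ▸ mem_insert e T))
  have hTC' := hTC.subset
  have he : Disjoint {e} C := disjoint_singleton_left.2 heC
  rw [insert_eq] at hTe hC₂ss ⊢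
  replace hC₂ss : C₂ ⊆ {e} ∪ (C \ T) := hC₂ss.trans (by tauto_set)
  obtain ⟨t, ht⟩ := hT
  have htC₂ : t ∉ C₂ := by
    intro htC₂
    rcases hC₂ss htC₂ with rfl | ⟨-, htT⟩
    exacts [heC (hTC' ht), htT ht]
  have heC₂ : e ∈ C₂ := by
    by_contra heC₂
    have he₂ : Disjoint {e} C₂ := disjoint_singleton_left.2 heC₂
    exact hC.not_ssubset hC₂ ((ssubset_iff_of_subset (by tauto_set)).2 ⟨t, hTC' ht, htC₂⟩)
  obtain ⟨C₃, hC₃ss, hC₃⟩ := hM.exists_isCircuit_subset_symmDiff hTe hC₂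
    fun h ↦ htC₂ (h ▸ Or.inr ht)
  have heC₂' : {e} ⊆ C₂ := singleton_subset_iff.2 heC₂
  obtain rfl : C₃ = C := hC₃.eq_of_subset_isCircuit hC (hC₃ss.trans (by tauto_set))
  convert hC₂ using 1
  tauto_set

lemma Binary.contractElem_isCircuit_sdiff (hM : Binary M) (hC : M.IsCircuit C)
    (hT : (M ／ {e}).IsCircuit T) (hTC : T ⊂ C \ {e}) : (M ／ {e}).IsCircuit ((C \ {e}) \ T) := by
  have hTe := hT.isCircuit_insert_of_contractElem
    fun hTM ↦ hC.not_ssubset hTM (hTC.trans_subset sdiff_subset)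
  have heC : e ∉ C := by
    intro heC
    have hTeC := hTe.eq_of_subset_isCircuit hC (insert_subset heC (hTC.subset.trans sdiff_subset))
    exact hTC.not_subset (by rw [← hTeC, sdiff_singleton_subset_iff])
  rw [sdiff_singleton_eq_self heC] at hTC ⊢
  obtain ⟨x, hxC, hxT⟩ := nonempty_of_ssubset hTC
  have hnt : (insert e (C \ T)).Nontrivial :=
    nontrivial_of_mem_mem_ne (mem_insert e _) (mem_insert_of_mem e ⟨hxC, hxT⟩)
      fun hex ↦ heC (hex ▸ hxC)
  simpa [heC] using
    (hM.isCircuit_insert_sdiff hC hTe hT.nonempty hTC heC).contractElem_isCircuit hnt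
      (mem_insert e _)

lemma Binary.even_ncard_inter_of_contractElem [M.Finitary] (hM : Binary M)
    (hC : M.IsCircuit C) (heK : e ∉ K)
    (hparity : ∀ T, (M ／ {e}).IsCircuit T → Even (T ∩ K).ncard) : Even (C ∩ K).ncard := by
  have heK' : Disjoint {e} K := disjoint_singleton_left.2 heK
  by_cases hCe : C ⊆ {e}
  · simp [show C ∩ K = ∅ by tauto_set]
  rw [show C ∩ K = (C \ {e}) ∩ K by tauto_set]
  obtain ⟨T, hTsub, hT⟩ := (hC.contract_dep_of_not_subset hCe).exists_isCircuit_subset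
  obtain rfl | hTC := hTsub.eq_or_ssubset
  · exact hparity _ hT
  rw [← ncard_inter_add_ncard_sdiff_eq_ncard _ T
    (hC.finite.subset (inter_subset_left.trans sdiff_subset))]
  convert (hparity _ hT).add (hparity _ (hM.contractElem_isCircuit_sdiff hC hT hTC)) using 3
  <;> tauto_set

lemma Matroid.IsCircuit.encard_eq_two_of_isCocircuit (hC : M.IsCircuit M.E)
    (hK : M.IsCocircuit M.E) : M.E.encard = 2 := by
  have hnt : M.E.Nontrivial := by
    simpa using hC.isCocircuit_inter_nontrivial hK (by simpa using hC.nonempty)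
  obtain ⟨x, hx⟩ := hC.nonempty
  obtain ⟨y, hy, hyx⟩ := hnt.exists_ne x
  have hB : M✶.IsBase {x} := by
    have := (isBasis_ground_iff.1 (hC.sdiff_singleton_isBasis hx)).compl_isBase_dual
    rwa [sdiff_sdiff_cancel_left (singleton_subset_iff.2 hx)] at this
  have hle : (M.E \ {y}).encard ≤ 1 := by
    simpa [← hB.encard_eq_eRank] using (hK.isCircuit.sdiff_singleton_indep hy).encard_le_eRank
  have hE : (M.E \ {y}).encard = 1 :=
    hle.antisymm (one_le_encard_iff_nonempty.2 ⟨x, hx, hyx.symm⟩)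
  rw [← encard_sdiff_singleton_add_one hy, hE, one_add_one_eq_two]

theorem Binary.even_ncard_inter [M.Finite] (hM : Binary M) (hC : M.IsCircuit C)
    (hK : M.IsCocircuit K) : Even (C ∩ K).ncard := by
  induction hn : M.E.ncard using Nat.strong_induction_on generalizing M C K with
  | _ n ih =>
  subst hn
  have ih' : ∀ {N : Matroid α} [N.Finite], N.E ⊂ M.E → Binary N → ∀ {C K}, N.IsCircuit C →
      N.IsCocircuit K → Even (C ∩ K).ncard :=
    fun hNM hN _ _ hC hK ↦ ih _ (ncard_lt_ncard hNM M.ground_finite) hN hC hK rfl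
  by_cases hEK : M.E ⊆ K
  swap
  · obtain ⟨e, heE, heK⟩ := not_subset.1 hEK
    have hK' : (M ／ {e}).IsCocircuit K :=
      contract_isCocircuit_iff.2 ⟨hK, disjoint_singleton_right.2 heK⟩
    exact hM.even_ncard_inter_of_contractElem hC heK fun T hT ↦
      ih' (sdiff_singleton_ssubset.2 heE) (hM.contractElem e) hT hK'
  by_cases hKC : K ⊆ C
  swap
  · obtain ⟨e, heK, heC⟩ := not_subset.1 hKC
    obtain hKe | hKe := (singleton_subset_iff.2 heK).eq_or_ssubset
    · simp [← hKe, heC]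
    have heC' : Disjoint {e} C := disjoint_singleton_left.2 heC
    rw [show C ∩ K = C ∩ (K \ {e}) by tauto_set]
    exact ih' (sdiff_singleton_ssubset.2 (hK.subset_ground heK)) (hM.delete {e})
      (delete_isCircuit_iff.2 ⟨hC, disjoint_singleton_right.2 heC⟩) (hK.delete_isCocircuit hKe)
  obtain rfl : C = M.E := hC.subset_ground.antisymm (hEK.trans hKC)
  obtain rfl : K = M.E := hK.subset_ground.antisymm hEK
  rw [inter_self, ncard_def, hC.encard_eq_two_of_isCocircuit hK]
  exact even_two

lemma Matroid.IsBase.mem_fundCircuit_iff_isBase {B : Set α} {f : α} (hB : M.IsBase B)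
    (he : e ∈ M.E) (heB : e ∉ B) (hf : f ∈ B) :
    f ∈ M.fundCircuit e B ↔ M.IsBase (insert e (B \ {f})) := by
  have hef : e ≠ f := fun h ↦ heB (h ▸ hf)
  rw [hB.indep.mem_fundCircuit_iff (by rwa [hB.closure_eq]) heB,
    ← insert_sdiff_singleton_comm hef]
  exact ⟨hB.exchange_isBase_of_indep heB, IsBase.indep⟩

lemma Matroid.IsBase.mem_fundCocircuit_iff_isBase {B : Set α} {f : α} (hB : M.IsBase B)
    (he : e ∈ M.E) (heB : e ∉ B) (hf : f ∈ B) :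
    e ∈ M.fundCocircuit f B ↔ M.IsBase (insert e (B \ {f})) := by
  rw [hB.mem_fundCocircuit_iff_mem_fundCircuit, hB.mem_fundCircuit_iff_isBase he heB hf]

lemma connEx_eq_fundCircuit_inter_fundCocircuit {A B : Set α} {a a' : α} (hA : M.IsBase A)
    (hB : M.IsBase B) (hAB : Disjoint A B) (ha : a ∈ A) (ha' : a' ∈ A) (hne : a ≠ a') :
    ConnEx M a a' A B = M.fundCircuit a B ∩ M.fundCocircuit a' A := by
  have haE := hA.subset_ground ha
  have haB := hAB.notMem_of_mem_left ha
  ext b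
  refine ⟨fun ⟨hbB, hbA', hbB'⟩ ↦ ?_, fun ⟨hb, hb'⟩ ↦ ?_⟩
  · exact ⟨(hB.mem_fundCircuit_iff_isBase haE haB hbB).2 hbB',
      (hA.mem_fundCocircuit_iff_isBase (hB.subset_ground hbB) (hAB.notMem_of_mem_right hbB) ha').2
        hbA'⟩
  have hbB : b ∈ B := by
    obtain rfl | hbB := M.fundCircuit_subset_insert a B hb
    · obtain rfl | ⟨-, haA⟩ := M.fundCocircuit_subset_insert_compl a' A hb'
      exacts [absurd rfl hne, absurd ha haA]
    exact hbB
  exact ⟨hbB,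
    (hA.mem_fundCocircuit_iff_isBase (hB.subset_ground hbB) (hAB.notMem_of_mem_right hbB) ha').1
      hb',
    (hB.mem_fundCircuit_iff_isBase haE haB hbB).1 hb⟩

end

theorem stmt_15 (M : Matroid α) [M.Finite] {A B : Set α} {a a' : α}
    (hM : Binary M)
    (hA : M.IsBase A) (hB : M.IsBase B) (hAB : Disjoint A B)
    (ha : a ∈ A) (ha' : a' ∈ A) (hne : a ≠ a') :
    Even (ConnEx M a a' A B).ncard := by
  rw [connEx_eq_fundCircuit_inter_fundCocircuit hA hB hAB ha ha' hne]
  exact hM.even_ncard_inter (hB.fundCircuit_isCircuit (hA.subset_ground ha)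
    (hAB.notMem_of_mem_left ha)) (Matroid.fundCocircuit_isCocircuit ha' hA)
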